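/- arXiv:2203.12095 — 3 statements merged into one kernel-verified Lean document; each statement's English description precedes it below -/
import Mathlib

section
/- Let k ≥ 1 and let b_1, …, b_k be integers such that every b_i is even and |b_i| ≥ 2. Then |(b_1 : ℚ) − CF([b_2, …, b_k])| > 1, and consequently 0 < |CF([b_1, …, b_k])| < 1. In particular the recursion defining CF never divides by zero on such lists. -/
/-- Continued fraction value: `CF [] = 0`, `CF (b :: T) = 1/(b - CF T)`. -/
def CF : List ℤ → ℚ
  | [] => 0
  | b :: T => 1 / ((b : ℚ) - CF T)

lemma cf_lt_one (L : List ℤ) (h : ∀ c ∈ L, Even c ∧ 2 ≤ |c|) : |CF L| < 1 := by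
  induction L with
  | nil => simp [CF]
  | cons b T ih =>
    have hb := (h b (by simp)).2
    have hbq : (2 : ℚ) ≤ |(b : ℚ)| := by rw [← Int.cast_abs]; exact_mod_cast hb
    have hT : |CF T| < 1 := ih (fun c hc => h c (by simp [hc]))
    have h1 : 1 < |(b : ℚ) - CF T| := by
      have := abs_sub_abs_le_abs_sub (b : ℚ) (CF T)
      linarith
    have hne : |(b : ℚ) - CF T| ≠ 0 := by positivity
    rw [CF, abs_div, abs_one, div_lt_one (by linarith)]
    exact h1

/-- For a nonempty list of even integers of absolute value at least 2,
the quantity `b₁ - CF(tail)` has absolute value greater than 1, and hence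
`0 < |CF(list)| < 1`. -/
theorem cf_estimate (b : ℤ) (T : List ℤ)
    (h : ∀ c ∈ b :: T, Even c ∧ 2 ≤ |c|) :
    1 < |(b : ℚ) - CF T| ∧ 0 < |CF (b :: T)| ∧ |CF (b :: T)| < 1 := by
  have hb := (h b (by simp)).2
  have hbq : (2 : ℚ) ≤ |(b : ℚ)| := by rw [← Int.cast_abs]; exact_mod_cast hb
  have hT : |CF T| < 1 := cf_lt_one T (fun c hc => h c (by simp [hc]))
  have h1 : 1 < |(b : ℚ) - CF T| := by
    have := abs_sub_abs_le_abs_sub (b : ℚ) (CF T)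
    linarith
  refine ⟨h1, ?_, cf_lt_one (b :: T) h⟩
  rw [CF, abs_div, abs_one]
  positivity
end

section
/- Let L be any finite list of integers (possibly empty) all of whose entries are even and have absolute value at least 2. Write the rational number CF(L) in lowest terms as p/q with q > 0 and gcd(|p|, q) = 1. Then p and q have different parities; equivalently, p + q is odd. -/
lemma cf_aux (L : List ℤ) (h : ∀ c ∈ L, Even c ∧ 2 ≤ |c|) :
    |CF L| < 1 ∧ Odd ((CF L).num + ((CF L).den : ℤ)) := by
  induction L with
  | nil => simp [CF]
  | cons b T ih =>
    obtain ⟨hb, hb2⟩ := h b (by simp)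
    obtain ⟨hlt, hodd⟩ := ih (fun c hc => h c (List.mem_cons_of_mem _ hc))
    set x := CF T with hx
    have hb2' : (2:ℚ) ≤ |(b:ℚ)| := by
      rw [← Int.cast_abs]; exact_mod_cast hb2
    have hbq : (1:ℚ) < |(b:ℚ) - x| := by
      have h1 : |(b:ℚ)| - |x| ≤ |(b:ℚ) - x| := abs_sub_abs_le_abs_sub _ _
      linarith
    have hne : (b:ℚ) - x ≠ 0 := by
      intro h0
      rw [h0, abs_zero] at hbq
      linarith
    have hcf : CF (b :: T) = 1 / ((b:ℚ) - x) := rfl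
    have habs : |CF (b :: T)| < 1 := by
      rw [hcf, abs_div, abs_one, div_lt_one (by linarith)]
      exact hbq
    refine ⟨habs, ?_⟩
    set r := CF (b :: T) with hr
    set p := x.num with hp
    set q := (x.den : ℤ) with hq
    set n := r.num with hn
    set d := (r.den : ℤ) with hd
    have hq0 : (q:ℚ) ≠ 0 := by simp [hq]
    have hd0 : (d:ℚ) ≠ 0 := by simp [hd]
    have hxval : x = (p:ℚ) / q := (Rat.num_div_den x).symm
    have hrval : r = (n:ℚ) / d := (Rat.num_div_den r).symm
    have key : n * (b * q - p) = q * d := by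
      have h1 : r * ((b:ℚ) - x) = 1 := by
        rw [hcf]; field_simp
      rw [hxval, hrval] at h1
      have h2 : (n:ℚ) * (b * q - p) = q * d := by
        field_simp at h1
        linarith
      exact_mod_cast h2
    have hcop1 : ¬ (Even n ∧ Even d) := by
      rintro ⟨⟨a, ha⟩, ⟨c, hc⟩⟩
      have := r.reduced
      have h2 : (2 : ℕ) ∣ Nat.gcd r.num.natAbs r.den := by
        refine Nat.dvd_gcd ?_ ?_
        · have : (2:ℤ) ∣ r.num := ⟨a, by omega⟩
          exact Int.natAbs_dvd_natAbs.2 (by simpa using this)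
        · omega
      rw [this] at h2
      omega
    have hcop2 : ¬ (Even p ∧ Even q) := by
      rintro ⟨⟨a, ha⟩, ⟨c, hc⟩⟩
      have := x.reduced
      have h2 : (2 : ℕ) ∣ Nat.gcd x.num.natAbs x.den := by
        refine Nat.dvd_gcd ?_ ?_
        · have : (2:ℤ) ∣ x.num := ⟨a, by omega⟩
          exact Int.natAbs_dvd_natAbs.2 (by simpa using this)
        · omega
      rw [this] at h2
      omega
    have hk : Even (n * (b * q - p)) ↔ Even (q * d) := by rw [key]
    rw [Int.not_even_iff_odd.symm, Int.even_add] at hodd ⊢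
    rw [Int.even_mul, Int.even_mul, Int.even_sub, Int.even_mul] at hk
    have hb' : Even b := hb
    clear key hxval hrval hq0 hd0 hcf habs hlt hbq hne hb2 hb2' hb
    clear_value r x
    clear hr hx h ih
    tauto

/-- For any list of even integers of absolute value at least 2, the numerator
and denominator of `CF L` (in lowest terms) have different parities, i.e.
their sum is odd. -/
theorem cf_num_den_parity (L : List ℤ)
    (h : ∀ c ∈ L, Even c ∧ 2 ≤ |c|) :
    Odd ((CF L).num + ((CF L).den : ℤ)) := by
  exact (cf_aux L h).2
end

section
/- Let x be a rational number whose denominator in lowest terms is odd. Then there exist an integer r and a finite list L of integers, each of which is even and has absolute value at least 2, such that x = (r : ℚ) + CF(L). -/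
/-!
Write the fraction as `p / q` with `|p| < |q|` and `p + q` odd; this parity condition, unlike
"numerator or denominator even", does not depend on the representation. With `b` the even integer
nearest to `q / p` one has `p / q = 1 / (b - p' / p)` for `p' = b p - q`, where `|p'| ≤ |p|`, and
equality would make `q / p = b ± 1` an odd integer, against `p + q` odd. So `|p'| < |p|`, `p' + p`
is again odd, and the recursion terminates. A rational with odd denominator `d` is brought into
this form by subtracting an integer `r` for which the numerator `n - r d` is even.
-/

theorem exists_even_mul_sub_lt {p q : ℤ} (hp : p ≠ 0) (hpq : Odd (p + q)) :
    ∃ b, Even b ∧ |b * p - q| < |p| := by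
  set c := round ((q : ℚ) / (2 * p))
  have hle : |2 * c * p - q| ≤ |p| := by
    have hround := abs_sub_round ((q : ℚ) / (2 * p))
    have hscale : ((2 * c * p - q : ℤ) : ℚ) = -(2 * p) * ((q : ℚ) / (2 * p) - c) := by
      push_cast
      field_simp
      ring
    have : |((2 * c * p - q : ℤ) : ℚ)| ≤ |(p : ℚ)| := by
      rw [hscale, abs_mul, abs_neg, abs_mul, abs_two]
      nlinarith [abs_nonneg (p : ℚ)]
    exact_mod_cast this
  refine ⟨2 * c, even_two_mul c, lt_of_le_of_ne hle fun heq => ?_⟩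
  rw [← Int.not_even_iff_odd] at hpq
  rcases abs_eq_abs.mp heq with h | h
  · exact hpq ⟨c * p, by linarith⟩
  · exact hpq ⟨c * p + p, by linarith⟩

theorem exists_even_cf_of_odd_add (p q : ℤ) (hlt : |p| < |q|) (hodd : Odd (p + q)) :
    ∃ L : List ℤ, (∀ c ∈ L, Even c ∧ 2 ≤ |c|) ∧ (p : ℚ) / q = CF L := by
  rcases eq_or_ne p 0 with rfl | hp
  · exact ⟨[], by simp, by simp [CF]⟩
  obtain ⟨b, hb, hbp⟩ := exists_even_mul_sub_lt hp hodd
  have hb2 : 2 ≤ |b| := by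
    have hb0 : b ≠ 0 := by
      rintro rfl
      rw [zero_mul, zero_sub, abs_neg] at hbp
      exact hbp.not_gt hlt
    obtain ⟨k, rfl⟩ := hb
    simp only [Int.abs_eq_natAbs]
    omega
  have hodd' : Odd (b * p - q + p) := by
    rw [show b * p - q + p = b * p - 2 * q + (p + q) by ring]
    exact ((hb.mul_right p).sub (even_two_mul q)).add_odd hodd
  obtain ⟨L, hL, hCF⟩ := exists_even_cf_of_odd_add (b * p - q) p hbp hodd'
  refine ⟨b :: L, List.forall_mem_cons.mpr ⟨⟨hb, hb2⟩, hL⟩, ?_⟩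
  have hp' : (p : ℚ) ≠ 0 := Int.cast_ne_zero.mpr hp
  rw [CF, ← hCF, show (b : ℚ) - ((b * p - q : ℤ) : ℚ) / p = q / p by push_cast; field_simp; ring,
    one_div_div]
termination_by q.natAbs
decreasing_by simp only [Int.abs_eq_natAbs] at hlt; omega

theorem exists_even_cf_of_odd_den (n d : ℤ) (hd : Odd d) :
    ∃ (r : ℤ) (L : List ℤ), (∀ c ∈ L, Even c ∧ 2 ≤ |c|) ∧ (n : ℚ) / d = r + CF L := by
  obtain ⟨e, he⟩ : ∃ e : ℤ, Even (n - e * d) := by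
    rcases Int.even_or_odd n with h | h
    · exact ⟨0, by simpa using h⟩
    · exact ⟨1, by simpa using h.sub_odd hd⟩
  have hd0 : d ≠ 0 := by rintro rfl; simp at hd
  obtain ⟨b, hb, hlt⟩ := exists_even_mul_sub_lt (q := n - e * d) hd0 (hd.add_even he)
  have hsplit : n - (b + e) * d = n - e * d - b * d := by ring
  have hrem : |n - (b + e) * d| < |d| := by rwa [hsplit, abs_sub_comm]
  have hodd : Odd (n - (b + e) * d + d) := by
    rw [hsplit]
    exact (he.sub (hb.mul_right d)).add_odd hd
  obtain ⟨L, hL, hCF⟩ := exists_even_cf_of_odd_add _ _ hrem hodd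
  refine ⟨b + e, L, hL, ?_⟩
  have hd0' : (d : ℚ) ≠ 0 := Int.cast_ne_zero.mpr hd0
  rw [← hCF]
  push_cast
  field_simp
  ring

/-- Every rational with odd denominator has a continued fraction expansion
`x = r + CF L` with all entries of `L` even of absolute value at least 2. -/
theorem exists_even_cf_expansion (x : ℚ) (hx : Odd x.den) :
    ∃ (r : ℤ) (L : List ℤ), (∀ c ∈ L, Even c ∧ 2 ≤ |c|) ∧ x = (r : ℚ) + CF L := by
  obtain ⟨r, L, hL, h⟩ := exists_even_cf_of_odd_den x.num x.den hx.natCast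
  exact ⟨r, L, hL, by rw [← h]; exact_mod_cast (Rat.num_div_den x).symm⟩
end
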